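/- arXiv:1008.5337 — 2 statements merged into one kernel-verified Lean document; each statement's English description precedes it below -/
import Mathlib

section
/- Let m ≥ 3 and let D be the (m+1) × (2^m - m - 1) matrix over 𝔽₂ whose columns c are indexed by all binary vectors of weight ≥ 2 in 𝔽₂^m, whose first row has entry w(c) - 1 mod 2 in column c, i.e. entry 1 on columns of even weight and 0 on columns of odd weight, and whose remaining m rows form the matrix [H₂, H₃, …, H_m] whose columns are all vectors of 𝔽₂^m of weight ≥ 2. Then D·Dᵀ = I (the (m+1) × (m+1) identity over 𝔽₂). -/
/-- Hamming weight of a Boolean vector. -/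
def bwt {m : ℕ} (v : Fin m → Bool) : ℕ := (Finset.univ.filter fun i => v i = true).card

namespace GottesmanAux

variable {m : ℕ}

/-- the zero vector -/
def vzero (m : ℕ) : Fin m → Bool := fun _ => false

/-- the standard basis vector -/
def evec (i : Fin m) : Fin m → Bool := fun j => decide (j = i)

lemma zmod2_add_self (x : ZMod 2) : x + x = 0 := by revert x; decide

lemma zmod2_mul_self (x : ZMod 2) : x * x = x := by revert x; decide

lemma bwt_vzero : bwt (vzero m) = 0 := by
  simp [bwt, vzero]

lemma evec_apply (i j : Fin m) : evec i j = decide (j = i) := rfl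

lemma bwt_evec (i : Fin m) : bwt (evec i) = 1 := by
  have : (Finset.univ.filter fun j => evec i j = true) = {i} := by
    ext j; simp [evec]
  simp [bwt, this]

/-- Flipping one coordinate kills the sum in `ZMod 2` if `f` is invariant. -/
lemma flip_sum (j : Fin m) (f : (Fin m → Bool) → ZMod 2)
    (hf : ∀ v, f (Function.update v j (!v j)) = f v) :
    ∑ v : Fin m → Bool, f v = 0 := by
  apply Finset.sum_ninvolution (g := fun v => Function.update v j (!v j))
  · intro v
    rw [hf v, zmod2_add_self]
  · intro v _
    intro h
    have := congrFun h j
    simp at this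
  · intro v; exact Finset.mem_univ _
  · intro v
    funext k
    by_cases hk : k = j
    · subst hk; simp
    · simp [Function.update_of_ne hk]

lemma sum_one (hm : 1 ≤ m) : ∑ _v : Fin m → Bool, (1 : ZMod 2) = 0 := by
  exact flip_sum ⟨0, hm⟩ _ (fun _ => rfl)

lemma sum_ind (hm : 2 ≤ m) (i : Fin m) :
    ∑ v : Fin m → Bool, (if v i = true then (1 : ZMod 2) else 0) = 0 := by
  -- pick j ≠ i
  obtain ⟨j, hj⟩ : ∃ j : Fin m, j ≠ i := by
    have : Nontrivial (Fin m) := Fin.nontrivial_iff_two_le.mpr (by omega)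
    exact exists_ne i
  apply flip_sum j
  intro v
  rw [Function.update_of_ne (Ne.symm hj)]

lemma sum_ind2 (hm : 3 ≤ m) {i j : Fin m} (hij : i ≠ j) :
    ∑ v : Fin m → Bool,
      (if v i = true then (1 : ZMod 2) else 0) * (if v j = true then (1 : ZMod 2) else 0) = 0 := by
  -- pick k ∉ {i, j}
  obtain ⟨k, hki, hkj⟩ : ∃ k : Fin m, k ≠ i ∧ k ≠ j := by
    by_contra h
    push_neg at h
    have hsub : (Finset.univ : Finset (Fin m)) ⊆ {i, j} := by
      intro k _
      rcases eq_or_ne k i with rfl | hk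
      · simp
      · simp [h k hk]
    have := Finset.card_le_card hsub
    simp only [Finset.card_univ, Fintype.card_fin] at this
    have h2 : ({i, j} : Finset (Fin m)).card ≤ 2 := Finset.card_insert_le _ _ |>.trans (by simp)
    omega
  apply flip_sum k
  intro v
  rw [Function.update_of_ne (Ne.symm hki), Function.update_of_ne (Ne.symm hkj)]

lemma bwt_cast (v : Fin m → Bool) :
    ((bwt v : ℕ) : ZMod 2) = ∑ i : Fin m, (if v i = true then (1 : ZMod 2) else 0) := by
  rw [bwt, Finset.card_filter]
  push_cast
  simp

lemma even_ind (n : ℕ) : (if Even n then (1 : ZMod 2) else 0) = (n : ZMod 2) + 1 := by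
  rcases Nat.even_or_odd n with h | h
  · rw [if_pos h, ← ZMod.natCast_mod, Nat.even_iff.mp h]
    decide
  · rw [if_neg (Nat.not_even_iff_odd.mpr h), ← ZMod.natCast_mod, Nat.odd_iff.mp h]
    decide

/-- the complement of the weight-≥2 vectors -/
lemma low_filter :
    (Finset.univ.filter fun v : Fin m → Bool => ¬ 2 ≤ bwt v)
      = insert (vzero m) (Finset.univ.image evec) := by
  ext v
  simp only [Finset.mem_filter, Finset.mem_univ, true_and, Finset.mem_insert, Finset.mem_image,
    not_le]
  constructor
  · intro hv
    have h01 : bwt v = 0 ∨ bwt v = 1 := by omega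
    rcases h01 with h | h
    · left
      funext j
      have : (Finset.univ.filter fun i => v i = true) = ∅ := Finset.card_eq_zero.mp h
      have hj : j ∉ (Finset.univ.filter fun i => v i = true) := this ▸ Finset.notMem_empty j
      simp at hj
      simp [hj, vzero]
    · right
      obtain ⟨i, hi⟩ := Finset.card_eq_one.mp h
      refine ⟨i, ?_⟩
      funext j
      have hj : v j = true ↔ j = i := by
        rw [show (v j = true ↔ j ∈ ({i} : Finset (Fin m))) from by
          rw [← hi]; simp, Finset.mem_singleton]
      by_cases hji : j = i
      · subst hji
        simp [evec, hj.mpr rfl]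
      · simp only [evec]
        have : v j ≠ true := fun h' => hji (hj.mp h')
        simp [hji, Bool.eq_false_iff.mpr this]
  · rintro (rfl | ⟨i, _, rfl⟩)
    · rw [bwt_vzero]; omega
    · rw [bwt_evec]; omega

lemma vzero_notMem_image : vzero m ∉ (Finset.univ.image (evec (m := m))) := by
  intro h
  obtain ⟨i, _, hi⟩ := Finset.mem_image.mp h
  have := congrFun hi i
  simp [evec, vzero] at this

lemma evec_injective : Function.Injective (evec (m := m)) := by
  intro i j h
  have := congrFun h i
  simp [evec] at this
  exact this

/-- Key decomposition: a sum over weight-≥2 vectors in terms of the full sum. -/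
lemma sub_sum (F : (Fin m → Bool) → ZMod 2) :
    ∑ c : {v : Fin m → Bool // 2 ≤ bwt v}, F c.val
      = (∑ v : Fin m → Bool, F v) + (F (vzero m) + ∑ i : Fin m, F (evec i)) := by
  have h1 : ∑ c : {v : Fin m → Bool // 2 ≤ bwt v}, F c.val
      = ∑ v ∈ Finset.univ.filter (fun v : Fin m → Bool => 2 ≤ bwt v), F v :=
    (Finset.sum_subtype (p := fun v => 2 ≤ bwt v) _ (by simp) F).symm
  have h2 := Finset.sum_filter_add_sum_filter_not Finset.univ
    (fun v : Fin m → Bool => 2 ≤ bwt v) F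
  have h3 : ∑ v ∈ Finset.univ.filter (fun v : Fin m → Bool => ¬ 2 ≤ bwt v), F v
      = F (vzero m) + ∑ i : Fin m, F (evec i) := by
    rw [low_filter, Finset.sum_insert vzero_notMem_image,
      Finset.sum_image (fun i _ j _ h => evec_injective h)]
  rw [h1, ← h3, ← h2, add_assoc, zmod2_add_self, add_zero]

lemma sum_E (hm : 3 ≤ m) :
    ∑ v : Fin m → Bool, (if Even (bwt v) then (1 : ZMod 2) else 0) = 0 := by
  have : ∀ v : Fin m → Bool, (if Even (bwt v) then (1 : ZMod 2) else 0)
      = (∑ k : Fin m, (if v k = true then (1 : ZMod 2) else 0)) + 1 := by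
    intro v
    rw [even_ind, bwt_cast]
  rw [Finset.sum_congr rfl fun v _ => this v, Finset.sum_add_distrib, sum_one (by omega),
    add_zero, Finset.sum_comm]
  exact Finset.sum_eq_zero fun k _ => sum_ind (by omega) k

lemma sum_E_mul_ind (hm : 3 ≤ m) (i : Fin m) :
    ∑ v : Fin m → Bool,
      (if Even (bwt v) then (1 : ZMod 2) else 0) * (if v i = true then 1 else 0) = 0 := by
  have : ∀ v : Fin m → Bool,
      (if Even (bwt v) then (1 : ZMod 2) else 0) * (if v i = true then 1 else 0)
      = (∑ k : Fin m, (if v k = true then (1 : ZMod 2) else 0) * (if v i = true then 1 else 0))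
        + (if v i = true then (1 : ZMod 2) else 0) := by
    intro v
    rw [even_ind, bwt_cast, add_mul, one_mul, Finset.sum_mul]
  rw [Finset.sum_congr rfl fun v _ => this v, Finset.sum_add_distrib, sum_ind (by omega) i,
    add_zero, Finset.sum_comm]
  apply Finset.sum_eq_zero
  intro k _
  by_cases hk : k = i
  · subst hk
    rw [show (∑ v : Fin m → Bool,
        (if v k = true then (1 : ZMod 2) else 0) * (if v k = true then 1 else 0))
        = ∑ v : Fin m → Bool, (if v k = true then (1 : ZMod 2) else 0) from
      Finset.sum_congr rfl fun v _ => zmod2_mul_self _]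
    exact sum_ind (by omega) k
  · exact sum_ind2 hm hk

lemma E_vzero : (if Even (bwt (vzero m)) then (1 : ZMod 2) else 0) = 1 := by
  simp [bwt_vzero]

lemma E_evec (k : Fin m) : (if Even (bwt (evec k)) then (1 : ZMod 2) else 0) = 0 := by
  simp [bwt_evec]

end GottesmanAux

open GottesmanAux in
theorem gottesman_D_DDt_eq_one (m : ℕ) (hm : 3 ≤ m)
    (D : Matrix (Unit ⊕ Fin m) {v : Fin m → Bool // 2 ≤ bwt v} (ZMod 2))
    (hD0 : ∀ (c : {v : Fin m → Bool // 2 ≤ bwt v}),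
      D (Sum.inl ()) c = if Even (bwt c.val) then 1 else 0)
    (hD1 : ∀ (i : Fin m) (c : {v : Fin m → Bool // 2 ≤ bwt v}),
      D (Sum.inr i) c = if c.val i = true then 1 else 0) :
    D * D.transpose = 1 := by
  ext a b
  rw [Matrix.mul_apply]
  simp only [Matrix.transpose_apply]
  match a, b with
  | Sum.inl (), Sum.inl () =>
    simp only [hD0]
    rw [Finset.sum_congr rfl fun c _ => zmod2_mul_self _,
      sub_sum (fun v => if Even (bwt v) then (1 : ZMod 2) else 0),
      sum_E hm, E_vzero, Finset.sum_congr rfl fun k _ => E_evec k]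
    simp [Matrix.one_apply]
  | Sum.inl (), Sum.inr i =>
    simp only [hD0, hD1]
    rw [sub_sum (fun v => (if Even (bwt v) then (1 : ZMod 2) else 0)
        * (if v i = true then 1 else 0)),
      sum_E_mul_ind hm i]
    have h2 : ((if Even (bwt (vzero m)) then (1 : ZMod 2) else 0)
        * (if (vzero m) i = true then 1 else 0)) = 0 := by simp [vzero]
    have h3 : ∀ k : Fin m, ((if Even (bwt (evec k)) then (1 : ZMod 2) else 0)
        * (if (evec k) i = true then 1 else 0)) = 0 := by
      intro k; rw [E_evec, zero_mul]
    rw [h2, Finset.sum_congr rfl fun k _ => h3 k]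
    simp [Matrix.one_apply]
  | Sum.inr i, Sum.inl () =>
    simp only [hD0, hD1]
    rw [Finset.sum_congr rfl fun c _ => mul_comm _ _,
      sub_sum (fun v => (if Even (bwt v) then (1 : ZMod 2) else 0)
        * (if v i = true then 1 else 0)),
      sum_E_mul_ind hm i]
    have h2 : ((if Even (bwt (vzero m)) then (1 : ZMod 2) else 0)
        * (if (vzero m) i = true then 1 else 0)) = 0 := by simp [vzero]
    have h3 : ∀ k : Fin m, ((if Even (bwt (evec k)) then (1 : ZMod 2) else 0)
        * (if (evec k) i = true then 1 else 0)) = 0 := by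
      intro k; rw [E_evec, zero_mul]
    rw [h2, Finset.sum_congr rfl fun k _ => h3 k]
    simp [Matrix.one_apply]
  | Sum.inr i, Sum.inr j =>
    simp only [hD1]
    by_cases hij : i = j
    · subst hij
      rw [Finset.sum_congr rfl fun c _ => zmod2_mul_self _,
        sub_sum (fun v => if v i = true then (1 : ZMod 2) else 0),
        sum_ind (by omega) i]
      have h2 : (if (vzero m) i = true then (1 : ZMod 2) else 0) = 0 := by simp [vzero]
      have h3 : ∑ k : Fin m, (if (evec k) i = true then (1 : ZMod 2) else 0) = 1 := by
        simp only [evec, decide_eq_true_eq]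
        rw [Finset.sum_ite_eq Finset.univ i (fun _ => (1 : ZMod 2))]
        simp
      rw [h2, h3]
      simp [Matrix.one_apply]
    · rw [sub_sum (fun v => (if v i = true then (1 : ZMod 2) else 0)
          * (if v j = true then 1 else 0)),
        sum_ind2 hm hij]
      have h2 : ((if (vzero m) i = true then (1 : ZMod 2) else 0)
          * (if (vzero m) j = true then 1 else 0)) = 0 := by simp [vzero]
      have h3 : ∀ k : Fin m, ((if (evec k) i = true then (1 : ZMod 2) else 0)
          * (if (evec k) j = true then 1 else 0)) = 0 := by
        intro k
        rcases eq_or_ne i k with rfl | hk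
        · have : evec i j ≠ true := by
            simp only [evec, ne_eq, decide_eq_true_eq]
            exact fun h => hij h.symm
          simp [this]
        · have : evec k i ≠ true := by
            simp only [evec, ne_eq, decide_eq_true_eq]
            exact fun h => hk h
          simp [this]
      rw [h2, Finset.sum_congr rfl fun k _ => h3 k]
      simp [Matrix.one_apply, hij]
end

section
/- For the toric code on a k × k square lattice on the torus (n = 2k² qubits, one per edge), the vertex operators A_s and face operators B_p satisfy Π_s A_s = I and Π_p B_p = I, and the number of independent stabilizer generators is 2k² - 2, so the code encodes exactly 2 logical qubits. -/
/-- Edges of the `k × k` toric lattice: horizontal edges (left) and vertical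
edges (right), each labelled by a lattice site. -/
abbrev ToricEdge (k : ℕ) := (Fin k × Fin k) ⊕ (Fin k × Fin k)

/-- The `𝔽₂` row of the vertex (star) operator `A_s`: the indicator vector of
the four edges incident to the vertex `s` (horizontal edges at `s` and at
`(s.1, s.2 - 1)`, vertical edges at `s` and `(s.1 - 1, s.2)`, indices mod `k`). -/
def vertexRow (k : ℕ) (s : Fin k × Fin k) : ToricEdge k → ZMod 2 :=
  Sum.elim
    (fun e => (if e = s then 1 else 0) +
      (if e.1 = s.1 ∧ ((e.2 : ℕ) + 1) % k = (s.2 : ℕ) then 1 else 0))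
    (fun e => (if e = s then 1 else 0) +
      (if ((e.1 : ℕ) + 1) % k = (s.1 : ℕ) ∧ e.2 = s.2 then 1 else 0))

/-- The `𝔽₂` row of the face (plaquette) operator `B_p`: the indicator vector
of the four boundary edges of the face `p`. -/
def faceRow (k : ℕ) (p : Fin k × Fin k) : ToricEdge k → ZMod 2 :=
  Sum.elim
    (fun e => (if e = p then 1 else 0) +
      (if (e.1 : ℕ) = ((p.1 : ℕ) + 1) % k ∧ e.2 = p.2 then 1 else 0))
    (fun e => (if e = p then 1 else 0) +
      (if e.1 = p.1 ∧ (e.2 : ℕ) = ((p.2 : ℕ) + 1) % k then 1 else 0))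

/-- The symplectic `𝔽₂` representation of `A_s`: `X`-part is `vertexRow`,
`Z`-part is zero. -/
def vertexFull (k : ℕ) (s : Fin k × Fin k) : ToricEdge k ⊕ ToricEdge k → ZMod 2 :=
  Sum.elim (vertexRow k s) 0

/-- The symplectic `𝔽₂` representation of `B_p`: `X`-part is zero, `Z`-part is
`faceRow`. -/
def faceFull (k : ℕ) (p : Fin k × Fin k) : ToricEdge k ⊕ ToricEdge k → ZMod 2 :=
  Sum.elim 0 (faceRow k p)

/-!
Over `𝔽₂`, a combination `∑ c_s A_s` vanishes on an edge exactly when the coefficients of its two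
endpoints agree, so it vanishes iff `c` is invariant under both translations of the torus, i.e.
constant. Hence the vertex rows satisfy exactly one relation and span a space of dimension
`k² - 1`; dually for the face rows. The two spans lie in the `X` and `Z` halves of `𝔽₂^{4k²}`
respectively, so they are disjoint and their dimensions add up.
-/

open Module Submodule

theorem Submodule.finrank_sup_of_disjoint {K V : Type*} [DivisionRing K] [AddCommGroup V]
    [Module K V] {s t : Submodule K V} [FiniteDimensional K s] [FiniteDimensional K t]
    (h : Disjoint s t) : finrank K ↥(s ⊔ t) = finrank K s + finrank K t := by
  rw [← finrank_sup_add_finrank_inf_eq, h.eq_bot, finrank_bot, add_zero]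

/-- For empty `ι` both sides are `0`, the right one by truncated subtraction. -/
theorem finrank_span_range_eq_card_sub_one {K ι V : Type*} [Field K] [Fintype ι]
    [AddCommGroup V] [Module K V] (v : ι → V)
    (hv : ∀ c : ι → K, ∑ i, c i • v i = 0 ↔ ∀ i j, c i = c j) :
    finrank K (span K (Set.range v)) = Fintype.card ι - 1 := by
  rcases isEmpty_or_nonempty ι with hι | ⟨⟨i₀⟩⟩
  · rw [Set.range_eq_empty, span_empty, finrank_bot, Fintype.card_eq_zero]
  have hker : LinearMap.ker (Fintype.linearCombination K v) = K ∙ fun _ => 1 := by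
    ext c
    rw [LinearMap.mem_ker, Fintype.linearCombination_apply, hv, mem_span_singleton]
    constructor
    · exact fun hc => ⟨c i₀, funext fun i => by simp [hc i₀ i]⟩
    · rintro ⟨a, rfl⟩ _ _
      rfl
  have hrank := LinearMap.finrank_range_add_finrank_ker (Fintype.linearCombination K v)
  rw [Fintype.range_linearCombination, hker,
    finrank_span_singleton fun h => by simpa using congrFun h i₀,
    finrank_fintype_fun_eq_card] at hrank
  omega

theorem Sum.disjoint_ker_funLeft_inl_inr {R α β : Type*} [Semiring R] :
    Disjoint (LinearMap.ker (LinearMap.funLeft R R (Sum.inl : α → α ⊕ β)))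
      (LinearMap.ker (LinearMap.funLeft R R (Sum.inr : β → α ⊕ β))) := by
  refine disjoint_def.2 fun f hl hr => funext ?_
  rintro (a | b)
  · exact congrFun hl a
  · exact congrFun hr b

theorem Fin.val_finRotate {n : ℕ} (i : Fin n) : (finRotate n i : ℕ) = ((i : ℕ) + 1) % n := by
  have := i.neZero
  rw [finRotate_apply, Fin.val_add, Fin.val_one', Nat.add_mod_mod]

theorem Fin.apply_eq_apply_of_apply_finRotate {α : Type*} {n : ℕ} {f : Fin n → α}
    (hf : ∀ i, f (finRotate n i) = f i) (i j : Fin n) : f i = f j := by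
  cases n with
  | zero => exact i.elim0
  | succ n =>
    have h0 : ∀ i, f i = f 0 := by
      refine Fin.induction rfl fun i ih => ?_
      rw [← Fin.coeSucc_eq_succ, ← finRotate_apply, hf, ih]
    rw [h0 i, h0 j]

theorem Fin.apply_eq_apply_of_apply_finRotate₂ {α : Type*} {m n : ℕ} {f : Fin m × Fin n → α}
    (h₁ : ∀ i j, f (finRotate m i, j) = f (i, j)) (h₂ : ∀ i j, f (i, finRotate n j) = f (i, j))
    (x y : Fin m × Fin n) : f x = f y :=
  calc f x = f (x.1, y.2) :=
        Fin.apply_eq_apply_of_apply_finRotate (f := fun j => f (x.1, j)) (h₂ x.1) _ _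
    _ = f y := Fin.apply_eq_apply_of_apply_finRotate (f := fun i => f (i, y.2)) (h₁ · y.2) _ _

section ToricCode

variable {k : ℕ}

theorem sum_smul_vertexRow_apply_inl (c : Fin k × Fin k → ZMod 2) (e : Fin k × Fin k) :
    (∑ s, c s • vertexRow k s) (Sum.inl e) = c e + c (e.1, finRotate k e.2) := by
  have h (s : Fin k × Fin k) :
      (e.1 = s.1 ∧ ((e.2 : ℕ) + 1) % k = s.2) ↔ (e.1, finRotate k e.2) = s := by
    rw [← Fin.val_finRotate, Fin.val_inj, Prod.ext_iff]
  simp [Finset.sum_apply, vertexRow, mul_add, Finset.sum_add_distrib, h]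

theorem sum_smul_vertexRow_apply_inr (c : Fin k × Fin k → ZMod 2) (e : Fin k × Fin k) :
    (∑ s, c s • vertexRow k s) (Sum.inr e) = c e + c (finRotate k e.1, e.2) := by
  have h (s : Fin k × Fin k) :
      (((e.1 : ℕ) + 1) % k = s.1 ∧ e.2 = s.2) ↔ (finRotate k e.1, e.2) = s := by
    rw [← Fin.val_finRotate, Fin.val_inj, Prod.ext_iff]
  simp [Finset.sum_apply, vertexRow, mul_add, Finset.sum_add_distrib, h]

theorem sum_smul_faceRow_apply_inl (c : Fin k × Fin k → ZMod 2) (e : Fin k × Fin k) :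
    (∑ p, c p • faceRow k p) (Sum.inl e) = c e + c ((finRotate k).symm e.1, e.2) := by
  have h (p : Fin k × Fin k) :
      ((e.1 : ℕ) = ((p.1 : ℕ) + 1) % k ∧ e.2 = p.2) ↔ ((finRotate k).symm e.1, e.2) = p := by
    rw [← Fin.val_finRotate, Fin.val_inj, Prod.ext_iff, Equiv.symm_apply_eq]
  simp [Finset.sum_apply, faceRow, mul_add, Finset.sum_add_distrib, h]

theorem sum_smul_faceRow_apply_inr (c : Fin k × Fin k → ZMod 2) (e : Fin k × Fin k) :
    (∑ p, c p • faceRow k p) (Sum.inr e) = c e + c (e.1, (finRotate k).symm e.2) := by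
  have h (p : Fin k × Fin k) :
      (e.1 = p.1 ∧ (e.2 : ℕ) = ((p.2 : ℕ) + 1) % k) ↔ (e.1, (finRotate k).symm e.2) = p := by
    rw [← Fin.val_finRotate, Fin.val_inj, Prod.ext_iff, Equiv.symm_apply_eq]
  simp [Finset.sum_apply, faceRow, mul_add, Finset.sum_add_distrib, h]

theorem sum_smul_vertexRow_eq_zero_iff (c : Fin k × Fin k → ZMod 2) :
    ∑ s, c s • vertexRow k s = 0 ↔ ∀ x y, c x = c y := by
  constructor
  · intro h
    refine Fin.apply_eq_apply_of_apply_finRotate₂ (fun i j => ?_) (fun i j => ?_)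
    · have := congrFun h (Sum.inr (i, j))
      rwa [sum_smul_vertexRow_apply_inr, Pi.zero_apply, CharTwo.add_eq_zero, eq_comm] at this
    · have := congrFun h (Sum.inl (i, j))
      rwa [sum_smul_vertexRow_apply_inl, Pi.zero_apply, CharTwo.add_eq_zero, eq_comm] at this
  · intro hc
    funext e
    rcases e with e | e
    · rw [sum_smul_vertexRow_apply_inl, Pi.zero_apply, CharTwo.add_eq_zero]
      exact hc _ _
    · rw [sum_smul_vertexRow_apply_inr, Pi.zero_apply, CharTwo.add_eq_zero]
      exact hc _ _

theorem sum_smul_faceRow_eq_zero_iff (c : Fin k × Fin k → ZMod 2) :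
    ∑ p, c p • faceRow k p = 0 ↔ ∀ x y, c x = c y := by
  constructor
  · intro h
    refine Fin.apply_eq_apply_of_apply_finRotate₂ (fun i j => ?_) (fun i j => ?_)
    · have := congrFun h (Sum.inl (finRotate k i, j))
      rwa [sum_smul_faceRow_apply_inl, Equiv.symm_apply_apply, Pi.zero_apply,
        CharTwo.add_eq_zero] at this
    · have := congrFun h (Sum.inr (i, finRotate k j))
      rwa [sum_smul_faceRow_apply_inr, Equiv.symm_apply_apply, Pi.zero_apply,
        CharTwo.add_eq_zero] at this
  · intro hc
    funext e
    rcases e with e | e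
    · rw [sum_smul_faceRow_apply_inl, Pi.zero_apply, CharTwo.add_eq_zero]
      exact hc _ _
    · rw [sum_smul_faceRow_apply_inr, Pi.zero_apply, CharTwo.add_eq_zero]
      exact hc _ _

theorem sum_smul_vertexFull_eq_zero_iff (c : Fin k × Fin k → ZMod 2) :
    ∑ s, c s • vertexFull k s = 0 ↔ ∀ x y, c x = c y := by
  rw [← sum_smul_vertexRow_eq_zero_iff]
  simp [funext_iff, Sum.forall, Finset.sum_apply, vertexFull]

theorem sum_smul_faceFull_eq_zero_iff (c : Fin k × Fin k → ZMod 2) :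
    ∑ p, c p • faceFull k p = 0 ↔ ∀ x y, c x = c y := by
  rw [← sum_smul_faceRow_eq_zero_iff]
  simp [funext_iff, Sum.forall, Finset.sum_apply, faceFull]

theorem disjoint_span_vertexFull_span_faceFull :
    Disjoint (span (ZMod 2) (Set.range (vertexFull k)))
      (span (ZMod 2) (Set.range (faceFull k))) := by
  refine Sum.disjoint_ker_funLeft_inl_inr.symm.mono (span_le.2 ?_) (span_le.2 ?_) <;>
    rintro _ ⟨s, rfl⟩ <;> rfl

end ToricCode

theorem toric_code_relations_and_rank_general (k : ℕ) :
    (∑ s : Fin k × Fin k, vertexFull k s = 0) ∧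
    (∑ p : Fin k × Fin k, faceFull k p = 0) ∧
    Module.finrank (ZMod 2)
      (Submodule.span (ZMod 2)
        (Set.range (vertexFull k) ∪ Set.range (faceFull k))) = 2 * k ^ 2 - 2 := by
  refine ⟨?_, ?_, ?_⟩
  · simpa using (sum_smul_vertexFull_eq_zero_iff fun _ => 1).2 fun _ _ => rfl
  · simpa using (sum_smul_faceFull_eq_zero_iff fun _ => 1).2 fun _ _ => rfl
  rw [span_union, finrank_sup_of_disjoint disjoint_span_vertexFull_span_faceFull,
    finrank_span_range_eq_card_sub_one _ sum_smul_vertexFull_eq_zero_iff,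
    finrank_span_range_eq_card_sub_one _ sum_smul_faceFull_eq_zero_iff,
    Fintype.card_prod, Fintype.card_fin, sq]
  omega

theorem toric_code_relations_and_rank (k : ℕ) (hk : 1 ≤ k) :
    (∑ s : Fin k × Fin k, vertexFull k s = 0) ∧
    (∑ p : Fin k × Fin k, faceFull k p = 0) ∧
    Module.finrank (ZMod 2)
      (Submodule.span (ZMod 2)
        (Set.range (vertexFull k) ∪ Set.range (faceFull k))) = 2 * k ^ 2 - 2 :=
  toric_code_relations_and_rank_general k
end
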